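/- arXiv:math/0308050 — 8 statements merged into one kernel-verified Lean document; each statement's English description precedes it below -/
import Mathlib

section
/- (Littlewood–Offord) Let s ∈ ℝ, n ∈ ℕ, and a_1, …, a_n ∈ ℝ with |a_i| ≥ 1 for all i. Then at most C(n, ⌊n/2⌋) of the 2^n sums Σ_{i=1}^n ε_i a_i with ε_i ∈ {−1, +1} lie in the open interval (s−1, s+1). -/
/-!
Send a sign vector `ε` to the set `S ε` (`agreeSet a ε`) of indices where `ε i` agrees with
the sign of `a i`. This map is injective, and the signed sum equals
`2 ∑_{i ∈ S ε} |a i| - ∑ i, |a i|`. Hence if `S ε ⊂ S ε'` the two sums differ by at least `2`,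
so they cannot both lie in an open interval of length `2`: the sign vectors with sum in
`(s - 1, s + 1)` give an antichain of subsets, and Sperner's theorem bounds its size by
`C(n, ⌊n/2⌋)`.
-/

open scoped Classical

open Finset

namespace LittlewoodOfford

variable {ι : Type*} [Fintype ι]

/-- Zero counts as negative. -/
noncomputable def agreeSet (a : ι → ℝ) (ε : ι → Bool) : Finset ι :=
  univ.filter fun i => ε i = decide (0 < a i)

theorem agreeSet_injective (a : ι → ℝ) : Function.Injective (agreeSet a) := by
  intro ε ε' h
  funext i
  have hi : i ∈ agreeSet a ε ↔ i ∈ agreeSet a ε' := by rw [h]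
  simp only [agreeSet, mem_filter, mem_univ, true_and] at hi
  revert hi
  cases ε i <;> cases ε' i <;> cases decide (0 < a i) <;> simp

theorem signed_term_eq (a : ι → ℝ) (ε : ι → Bool) (i : ι) :
    (if ε i then (1 : ℝ) else -1) * a i = if i ∈ agreeSet a ε then |a i| else -|a i| := by
  simp only [agreeSet, mem_filter, mem_univ, true_and]
  rcases lt_or_ge 0 (a i) with h | h <;> cases ε i <;>
    simp [h, abs_of_pos, abs_of_nonpos, not_lt.mpr]

theorem signed_sum_eq (a : ι → ℝ) (ε : ι → Bool) :
    ∑ i, (if ε i then (1 : ℝ) else -1) * a i =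
      2 * ∑ i ∈ agreeSet a ε, |a i| - ∑ i, |a i| := by
  calc ∑ i, (if ε i then (1 : ℝ) else -1) * a i
      = ∑ i, ((2 * if i ∈ agreeSet a ε then |a i| else 0) - |a i|) :=
        sum_congr rfl fun i _ => by rw [signed_term_eq]; split_ifs <;> ring
    _ = 2 * ∑ i ∈ agreeSet a ε, |a i| - ∑ i, |a i| := by
        rw [sum_sub_distrib, ← mul_sum, sum_ite_mem, univ_inter]

theorem two_le_signed_sum_sub_of_ssubset {a : ι → ℝ} (ha : ∀ i, 1 ≤ |a i|)
    {ε ε' : ι → Bool} (h : agreeSet a ε ⊂ agreeSet a ε') :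
    2 ≤ ∑ i, (if ε' i then (1 : ℝ) else -1) * a i -
      ∑ i, (if ε i then (1 : ℝ) else -1) * a i := by
  obtain ⟨j, hj', hj⟩ := exists_of_ssubset h
  have hdiff : 1 ≤ ∑ i ∈ agreeSet a ε' \ agreeSet a ε, |a i| :=
    (ha j).trans <| single_le_sum (fun i _ => abs_nonneg (a i)) (mem_sdiff.mpr ⟨hj', hj⟩)
  rw [sum_sdiff_eq_sub h.subset] at hdiff
  rw [signed_sum_eq, signed_sum_eq]
  linarith

theorem isAntichain_agreeSet_image {a : ι → ℝ} (ha : ∀ i, 1 ≤ |a i|) (s : ℝ) :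
    IsAntichain (· ⊆ ·) (agreeSet a ''
      {ε | ∑ i, (if ε i then (1 : ℝ) else -1) * a i ∈ Set.Ioo (s - 1) (s + 1)}) := by
  rintro _ ⟨ε, ⟨hε₁, hε₂⟩, rfl⟩ _ ⟨ε', ⟨hε'₁, hε'₂⟩, rfl⟩ hne hsub
  have := two_le_signed_sum_sub_of_ssubset ha (hsub.ssubset_of_ne hne)
  linarith

theorem card_signed_sum_mem_Ioo_le [DecidableEq ι] {a : ι → ℝ} (ha : ∀ i, 1 ≤ |a i|)
    (s : ℝ) :
    (univ.filter fun ε : ι → Bool =>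
      ∑ i, (if ε i then (1 : ℝ) else -1) * a i ∈ Set.Ioo (s - 1) (s + 1)).card
      ≤ (Fintype.card ι).choose (Fintype.card ι / 2) := by
  rw [← card_image_of_injective _ (agreeSet_injective a)]
  apply IsAntichain.sperner
  simpa [coe_image, coe_filter] using isAntichain_agreeSet_image ha s

end LittlewoodOfford

/-- **Littlewood–Offord lemma.** If `|a i| ≥ 1` for all `i`, then at most
`C(n, ⌊n/2⌋)` of the `2^n` signed sums `∑ εᵢ aᵢ` with `εᵢ = ±1` lie in the
open interval `(s - 1, s + 1)`. -/
theorem stmt2 (s : ℝ) (n : ℕ) (a : Fin n → ℝ) (ha : ∀ i, 1 ≤ |a i|) :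
    (Finset.univ.filter (fun ε : Fin n → Bool =>
      (∑ i, (if ε i then (1 : ℝ) else -1) * a i) ∈ Set.Ioo (s - 1) (s + 1))).card
      ≤ n.choose (n / 2) := by
  simpa using LittlewoodOfford.card_signed_sum_mem_Ioo_le ha s
end

section
/- Let a_1, …, a_n ∈ ℝ be such that at least t of the a_i are nonzero, and let r ∈ ℝ. Then at most C(t, ⌊t/2⌋) · 2^{n−t} of the 2^n sums Σ_{i=1}^n ε_i a_i with ε_i ∈ {0,1} are equal to r. -/
/-!
Flipping the bits `ε i` at the indices where `a i < 0` turns the sums equal to `r` into subset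
sums of the positive weights `|a i|` that equal a fixed value. Such subsets form an antichain,
since adding an element strictly increases the sum, so Sperner's theorem bounds their number by
the middle binomial coefficient. In general one fixes `t` indices with `a i ≠ 0`: for each of the
`2 ^ (n - t)` choices of the remaining bits, the admissible choices of the `t` bits are bounded
in this way.
-/

open Finset

section
variable {ι M : Type*} [Fintype ι] [AddCommGroup M] [LinearOrder M] [IsOrderedAddMonoid M]

theorem card_filter_sum_eq_le_of_pos {b : ι → M} (hb : ∀ i, 0 < b i) (c : M) :
    #{A : Finset ι | ∑ i ∈ A, b i = c} ≤ (Fintype.card ι).choose (Fintype.card ι / 2) := by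
  refine IsAntichain.sperner fun A hA B hB hne hAB => ?_
  obtain ⟨i, hiB, hiA⟩ := exists_of_ssubset (ssubset_of_subset_of_ne hAB hne)
  have hlt := sum_lt_sum_of_subset hAB hiB hiA (hb i) fun j _ _ => (hb j).le
  simp only [coe_filter, mem_univ, true_and, Set.mem_ofPred_eq] at hA hB
  exact hlt.ne (hA.trans hB.symm)

theorem ite_xor_lt_zero_abs (e : Bool) (x : M) :
    (if xor e (decide (x < 0)) then |x| else 0) =
      (if e then x else 0) + if x < 0 then |x| else 0 := by
  by_cases hx : x < 0
  · cases e <;> simp [hx, abs_of_neg hx]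
  · simp [hx, abs_of_nonneg (not_lt.1 hx)]

theorem card_filter_sum_ite_eq_le [DecidableEq ι] {a : ι → M} (ha : ∀ i, a i ≠ 0) (c : M) :
    #{ε : ι → Bool | ∑ i, (if ε i then a i else 0) = c} ≤
      (Fintype.card ι).choose (Fintype.card ι / 2) := by
  calc _ ≤ #{A : Finset ι | ∑ i ∈ A, |a i| = c + ∑ i, if a i < 0 then |a i| else 0} := by
        refine card_le_card_of_injOn (fun ε => ({i | xor (ε i) (a i < 0)} : Finset ι)) ?_ ?_
        · intro ε hε
          simp only [coe_filter, mem_univ, true_and, Set.mem_ofPred_eq] at hε ⊢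
          rw [sum_filter]
          simp only [ite_xor_lt_zero_abs, sum_add_distrib, hε]
        · intro ε₁ _ ε₂ _ h
          funext i
          have hi := congrArg (i ∈ ·) h
          simp only [mem_filter, mem_univ, true_and] at hi
          exact Bool.xor_left_inj.1 (Bool.eq_iff_iff.2 (Iff.of_eq hi))
    _ ≤ _ := card_filter_sum_eq_le_of_pos (fun i => abs_pos.2 (ha i)) _

theorem card_filter_sum_ite_eq_le_of_ne_zero_on [DecidableEq ι] {a : ι → M} (T : Finset ι)
    (ha : ∀ i ∈ T, a i ≠ 0) (c : M) :
    #{ε : ι → Bool | ∑ i, (if ε i then a i else 0) = c} ≤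
      (#T).choose (#T / 2) * 2 ^ (Fintype.card ι - #T) := by
  let S : Finset (ι → Bool) := {ε | ∑ i, (if ε i then a i else 0) = c}
  let outside : (ι → Bool) → ({i // i ∉ T} → Bool) := fun ε i => ε i
  let inside : (ι → Bool) → (T → Bool) := fun ε i => ε i
  have hsplit (ε : ι → Bool) : ∑ i, (if ε i then a i else 0) =
      ∑ i : T, (if inside ε i then a i else 0) +
        ∑ i : {i // i ∉ T}, if outside ε i then a i else 0 := by
    convert (Fintype.sum_subtype_add_sum_subtype (· ∈ T) _).symm
  have hfiber (β : {i // i ∉ T} → Bool) :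
      #{ε ∈ S | outside ε = β} ≤ (#T).choose (#T / 2) := by
    calc _ ≤ #{α : T → Bool | ∑ i : T, (if α i then a i else 0) =
              c - ∑ i : {i // i ∉ T}, if β i then a i else 0} := by
          refine card_le_card_of_injOn inside ?_ ?_
          · intro ε hε
            simp only [S, coe_filter, mem_filter, mem_univ, true_and, Set.mem_ofPred_eq] at hε ⊢
            rw [eq_sub_iff_add_eq, ← hε.2, ← hε.1, hsplit]
          · intro ε₁ h₁ ε₂ h₂ h
            simp only [coe_filter, Set.mem_ofPred_eq] at h₁ h₂
            exact (Equiv.piEquivPiSubtypeProd (· ∈ T) fun _ => Bool).injective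
              (Prod.ext h (h₁.2.trans h₂.2.symm))
      _ ≤ _ := by
          simpa using card_filter_sum_ite_eq_le (fun i : T => ha i i.2) _
  calc #S ≤ (#T).choose (#T / 2) * #(S.image outside) :=
        card_le_mul_card_image _ _ fun β _ => hfiber β
    _ ≤ (#T).choose (#T / 2) * 2 ^ (Fintype.card ι - #T) := by
        gcongr
        refine (card_le_univ _).trans_eq ?_
        simp [Fintype.card_subtype_compl]

end

/-- If at least `t` of the `aᵢ` are nonzero, then at most `C(t, ⌊t/2⌋) · 2^(n - t)` of the
`2^n` sums `∑ εᵢ aᵢ` with `εᵢ ∈ {0, 1}` are equal to `r`. -/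
theorem stmt3 (n t : ℕ) (a : Fin n → ℝ) (r : ℝ)
    (ht : t ≤ (Finset.univ.filter (fun i => a i ≠ 0)).card) :
    (Finset.univ.filter (fun ε : Fin n → Bool =>
      (∑ i, (if ε i then (1 : ℝ) else 0) * a i) = r)).card
      ≤ t.choose (t / 2) * 2 ^ (n - t) := by
  obtain ⟨T, hT, rfl⟩ := exists_subset_card_eq ht
  simp only [ite_mul, one_mul, zero_mul]
  simpa using card_filter_sum_ite_eq_le_of_ne_zero_on T (fun i hi => (mem_filter.1 (hT hi)).2) r
end

section
/- For a random d×d 0/1-matrix M and any k ≤ d−1, the probability that some k+1 columns of M have strong rank exactly k is at most C(d,k) · C(d,k+1) · (2^{-k} C(k, ⌊k/2⌋))^{d−k}. -/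
/-!
A dependent set `s` of `k + 1` columns all of whose `k`-subsets are independent carries a
linear relation `c` with no zero coefficient, and `k` suitable rows `R` determine `c` up to
scaling. Once the rows `R` are fixed, every other row `q` must satisfy `∑ j ∈ s, c j q j = 0`,
and by the Littlewood–Offord inequality (Erdős's proof via Sperner's theorem) at most
`C(k + 1, ⌊(k + 1)/2⌋) ≤ 2 C(k, ⌊k/2⌋)` of the `2 ^ (k + 1)` patterns of `q` on `s` do so.
A union bound over `s` and `R` gives the estimate.
-/

open scoped Classical
open Filter Matrix

noncomputable section

/-- A 0/1-matrix (with `Bool` entries) viewed as a real matrix. -/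
def bmToR {m n : Type*} (M : Matrix m n Bool) : Matrix m n ℝ :=
  fun i j => if M i j then 1 else 0

open Finset Module

theorem card_sum_ite_eq_le_choose_half {ι α : Type*} [Fintype ι] [DecidableEq ι] [AddCommGroup α]
    [LinearOrder α] [IsOrderedAddMonoid α] {c : ι → α} (hc : ∀ i, c i ≠ 0) (τ : α) :
    #{x : ι → Bool | ∑ i, (if x i then c i else 0) = τ} ≤
      (Fintype.card ι).choose (Fintype.card ι / 2) := by
  -- Flipping `x` where `c` is negative makes the level set an antichain.
  set Φ : (ι → Bool) → Finset ι := fun x => {i | x i ≠ decide (c i < 0)}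
  have hΦ : Function.Injective Φ := by
    intro x y hxy
    funext i
    have := congrArg (i ∈ ·) hxy
    simp only [Φ, mem_filter, mem_univ, true_and, eq_iff_iff] at this
    revert this
    generalize decide (c i < 0) = b
    cases x i <;> cases y i <;> cases b <;> simp
  have hsum (x : ι → Bool) : ∑ i ∈ Φ x, |c i| =
      ∑ i, (if x i then c i else 0) - ∑ i, (if c i < 0 then c i else 0) := by
    rw [sum_filter, ← sum_sub_distrib]
    refine sum_congr rfl fun i _ => ?_
    by_cases hi : c i < 0 <;> cases x i <;> simp [hi, abs_of_neg, abs_of_nonneg, not_lt.mp]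
  rw [← card_image_of_injective _ hΦ]
  apply IsAntichain.sperner
  rintro _ hA _ hB hne hAB
  simp only [coe_image, Set.mem_image, mem_coe, mem_filter, mem_univ, true_and] at hA hB
  obtain ⟨x, hx, rfl⟩ := hA
  obtain ⟨y, hy, rfl⟩ := hB
  obtain ⟨i, hiy, hix⟩ := exists_of_ssubset (ssubset_of_subset_of_ne hAB hne)
  have hlt : ∑ i ∈ Φ x, |c i| < ∑ i ∈ Φ y, |c i| :=
    sum_lt_sum_of_subset hAB hiy hix (abs_pos.2 (hc i)) fun j _ _ => abs_nonneg _
  rw [hsum, hsum, hx, hy] at hlt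
  exact lt_irrefl _ hlt

theorem card_filter_comp_restrict {n β : Type*} [Fintype n] [DecidableEq n] [Fintype β]
    (s : Finset n)
    (Q : (s → β) → Prop) [DecidablePred Q] :
    #{q : n → β | Q fun j : s => q j} =
      #{y : s → β | Q y} * Fintype.card β ^ (Fintype.card n - #s) := by
  rw [← Fintype.card_subtype, ← Fintype.card_subtype]
  calc Fintype.card {q : n → β // Q fun j : s => q j}
      = Fintype.card {x : (s → β) × ({j // j ∉ s} → β) // Q x.1} :=
        Fintype.card_congr <|
          (Equiv.piEquivPiSubtypeProd (· ∈ s) fun _ => β).subtypeEquiv fun _ => Iff.rfl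
    _ = Fintype.card ({y : s → β // Q y} × ({j // j ∉ s} → β)) :=
        Fintype.card_congr Equiv.prodSubtypeFstEquivSubtypeProd
    _ = _ := by
        rw [Fintype.card_prod, Fintype.card_fun, Fintype.card_subtype_compl, Fintype.card_coe]

theorem card_sum_ite_restrict_eq_le {n α : Type*} [Fintype n] [DecidableEq n] [AddCommGroup α]
    [LinearOrder α] [IsOrderedAddMonoid α] (s : Finset n) {c : s → α} (hc : ∀ j, c j ≠ 0) (τ : α) :
    #{q : n → Bool | ∑ j : s, (if q j then c j else 0) = τ} ≤
      (#s).choose (#s / 2) * 2 ^ (Fintype.card n - #s) := by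
  refine (card_filter_comp_restrict s fun y : s → Bool =>
    ∑ j, (if y j then c j else 0) = τ).trans_le ?_
  rw [Fintype.card_bool]
  gcongr
  simpa using card_sum_ite_eq_le_choose_half hc τ

theorem exists_relation_ne_zero_of_linearIndepOn_erase {ι K V : Type*} [DecidableEq ι] [Ring K]
    [AddCommGroup V] [Module K V] {v : ι → V} {s : Finset ι} (hdep : ¬ LinearIndepOn K v s)
    (hind : ∀ j ∈ s, LinearIndepOn K v (s.erase j)) :
    ∃ c : ι → K, ∑ j ∈ s, c j • v j = 0 ∧ ∀ j ∈ s, c j ≠ 0 := by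
  obtain ⟨c, hrel, i, hi, hci⟩ := not_linearIndepOn_finset_iff.1 hdep
  refine ⟨c, hrel, fun j hj hcj => hci ?_⟩
  have hrel' : ∑ l ∈ s.erase j, c l • v l = 0 := by
    rwa [sum_erase _ (by rw [hcj, zero_smul])]
  by_cases hij : i = j
  · rwa [hij]
  · exact linearIndepOn_finset_iff.1 (hind j hj) c hrel' i (mem_erase.2 ⟨hij, hi⟩)

theorem exists_finset_card_eq_linearIndepOn {ι K V : Type*} [Fintype ι] [DivisionRing K]
    [AddCommGroup V] [Module K V] (v : ι → V) {r : ℕ}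
    (hr : r ≤ finrank K (Submodule.span K (Set.range v))) :
    ∃ R : Finset ι, #R = r ∧ LinearIndepOn K v R := by
  obtain ⟨b, -, -, hspan, hli⟩ :=
    exists_linearIndepOn_extension (linearIndepOn_empty K v) (Set.empty_subset Set.univ)
  have hb : finrank K (Submodule.span K (Set.range v)) = #b.toFinset := by
    rw [Set.image_univ] at hspan
    have : Submodule.span K (Set.range fun x : b => v x) = Submodule.span K (Set.range v) :=
      le_antisymm (Submodule.span_mono (Set.range_comp_subset_range _ _))
        (Submodule.span_le.2 (by rwa [← Set.image_eq_range]))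
    rw [← this, finrank_span_eq_card hli, Set.toFinset_card]
  obtain ⟨R, hRb, hR⟩ := exists_subset_card_eq (hr.trans hb.le)
  exact ⟨R, hR, hli.mono fun x hx => Set.mem_toFinset.1 (hRb hx)⟩

namespace Matrix

variable {K m n : Type*} [Field K]

theorem exists_eq_smul_of_mulVec_eq_zero [Fintype m] [Fintype n] {B : Matrix m n K}
    (hB : B.rank + 1 = Fintype.card n) {c c' : n → K} (hc : c ≠ 0) (hBc : B *ᵥ c = 0)
    (hBc' : B *ᵥ c' = 0) : ∃ a : K, c' = a • c := by
  have hker : finrank K (LinearMap.ker B.mulVecLin) = 1 := by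
    have := LinearMap.finrank_range_add_finrank_ker B.mulVecLin
    rw [Module.finrank_fintype_fun_eq_card] at this
    change B.rank + _ = _ at this
    omega
  obtain ⟨a, ha⟩ := (finrank_eq_one_iff_of_nonzero' (⟨c, hBc⟩ : LinearMap.ker B.mulVecLin)
    fun h => hc (congrArg Subtype.val h)).1 hker ⟨c', hBc'⟩
  exact ⟨a, (congrArg Subtype.val ha).symm⟩

/-- When `#R + 1 = #s`, the rows `R` pin down the relation `c` among the columns `s` up to a
scalar (`exists_eq_smul_of_mulVec_eq_zero`). -/
def IsCircuitCertificate (A : Matrix m n K) (s : Finset n) (R : Finset m) : Prop :=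
  LinearIndependent K (A.submatrix ((↑) : R → m) ((↑) : s → n)) ∧
    ∃ c : s → K, (∀ j, c j ≠ 0) ∧ A.submatrix id ((↑) : s → n) *ᵥ c = 0

theorem exists_isCircuitCertificate [DecidableEq n] [Fintype m] (A : Matrix m n K)
    {s : Finset n} (hdep : ¬ LinearIndepOn K Aᵀ s)
    (hind : ∀ j ∈ s, LinearIndepOn K Aᵀ (s.erase j)) :
    ∃ R : Finset m, #R + 1 = #s ∧ A.IsCircuitCertificate s R := by
  obtain ⟨c, hrel, hc⟩ := exists_relation_ne_zero_of_linearIndepOn_erase hdep hind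
  obtain ⟨j₀, hj₀⟩ : s.Nonempty := nonempty_iff_ne_empty.2 fun h => hdep <| by
    rw [h, coe_empty]; exact linearIndepOn_empty K _
  have hli₀ : LinearIndependent K fun j : s.erase j₀ => Aᵀ j := hind j₀ hj₀
  have hrank : #s - 1 ≤ (A.submatrix id ((↑) : s → n)).rank := by
    rw [rank_eq_finrank_span_cols, ← card_erase_of_mem hj₀, ← Fintype.card_coe,
      ← finrank_span_eq_card hli₀]
    refine Submodule.finrank_mono (Submodule.span_mono ?_)
    rintro _ ⟨j, rfl⟩
    exact ⟨⟨j, mem_of_mem_erase j.2⟩, rfl⟩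
  rw [rank_eq_finrank_span_row] at hrank
  obtain ⟨R, hR, hli⟩ := exists_finset_card_eq_linearIndepOn _ hrank
  have hs : 0 < #s := card_pos.2 ⟨j₀, hj₀⟩
  refine ⟨R, by omega, hli, fun j => c j, fun j => hc j j.2, ?_⟩
  funext i
  simpa [mulVec, dotProduct, mul_comm, Finset.sum_apply, ← sum_coe_sort s] using congrFun hrel i

end Matrix

theorem Nat.choose_succ_half_le_two_mul (k : ℕ) :
    (k + 1).choose ((k + 1) / 2) ≤ 2 * k.choose (k / 2) := by
  rcases Nat.eq_zero_or_pos ((k + 1) / 2) with h | h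
  · rw [h, Nat.choose_zero_right]
    have : 1 ≤ k.choose (k / 2) := Nat.choose_pos (Nat.div_le_self _ _)
    omega
  · obtain ⟨m, hm⟩ := Nat.exists_eq_add_of_le h
    rw [show (k + 1) / 2 = m + 1 by omega, Nat.choose_succ_succ']
    have h1 := Nat.choose_le_middle m k
    have h2 := Nat.choose_le_middle (m + 1) k
    omega

theorem bmToR_submatrix_mulVec_apply {m n : Type*} (M : Matrix m n Bool) (s : Finset n)
    (c : s → ℝ) (i : m) :
    ((bmToR M).submatrix id ((↑) : s → n) *ᵥ c) i = ∑ j : s, if M i j then c j else 0 := by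
  simp [mulVec, dotProduct, bmToR]

section Counting

variable {m n : Type*} [Fintype m] [Fintype n] [DecidableEq m] [DecidableEq n]

theorem card_isCircuitCertificate_fiber_le {s : Finset n} {R : Finset m} (hsR : #R + 1 = #s)
    (P : R → n → Bool) :
    #{M : Matrix m n Bool | (bmToR M).IsCircuitCertificate s R ∧ (fun i : R => M i) = P} ≤
      ((#s).choose (#s / 2) * 2 ^ (Fintype.card n - #s)) ^ (Fintype.card m - #R) := by
  obtain h | ⟨M₀, hM₀⟩ := eq_empty_or_nonempty
    {M : Matrix m n Bool | (bmToR M).IsCircuitCertificate s R ∧ (fun i : R => M i) = P}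
  · simp [h]
  obtain ⟨⟨-, c₀, hc₀, hker₀⟩, rfl⟩ := (mem_filter.1 hM₀).2
  set Sol : Finset (n → Bool) := {q | ∑ j : s, (if q j then c₀ j else 0) = 0}
  calc #{M : Matrix m n Bool | (bmToR M).IsCircuitCertificate s R ∧
        (fun i : R => M i) = fun i : R => M₀ i}
      ≤ #(Fintype.piFinset fun i => if i ∈ R then {M₀ i} else Sol) := by
        refine card_le_card fun M hM => ?_
        obtain ⟨⟨hli, c, hc, hker⟩, hrows⟩ := (mem_filter.1 hM).2
        have hsub : (bmToR M).submatrix ((↑) : R → m) ((↑) : s → n) =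
            (bmToR M₀).submatrix ((↑) : R → m) ((↑) : s → n) := by
          ext r j
          simp [bmToR, congrFun hrows r]
        have hrank : ((bmToR M).submatrix ((↑) : R → m) ((↑) : s → n)).rank + 1 =
            Fintype.card s := by
          rw [hli.rank_matrix (M := (bmToR M).submatrix _ _), Fintype.card_coe, Fintype.card_coe,
            hsR]
        obtain ⟨j⟩ : Nonempty s := (card_pos.1 (by omega)).coe_sort
        obtain ⟨a, rfl⟩ := exists_eq_smul_of_mulVec_eq_zero hrank (c := c) (c' := c₀)
          (fun h => hc j (by rw [h, Pi.zero_apply])) (funext fun r => congrFun hker r)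
          (by rw [hsub]; exact funext fun r => congrFun hker₀ r)
        refine Fintype.mem_piFinset.2 fun i => ?_
        split_ifs with hi
        · exact mem_singleton.2 (congrFun hrows ⟨i, hi⟩)
        · simp only [Sol, mem_filter, mem_univ, true_and, ← bmToR_submatrix_mulVec_apply,
            mulVec_smul, hker, smul_zero, Pi.zero_apply]
    _ = #Sol ^ (Fintype.card m - #R) := by
        simp [Fintype.card_piFinset, apply_ite card, prod_ite, filter_notMem_eq_sdiff,
          card_univ_sdiff]
    _ ≤ _ := Nat.pow_le_pow_left (card_sum_ite_restrict_eq_le s hc₀ 0) _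

theorem card_isCircuitCertificate_le {s : Finset n} {R : Finset m} (hsR : #R + 1 = #s) :
    #{M : Matrix m n Bool | (bmToR M).IsCircuitCertificate s R} ≤ 2 ^ (#R * Fintype.card n) *
      ((#R).choose (#R / 2) * 2 ^ (Fintype.card n - #R)) ^ (Fintype.card m - #R) := by
  have hrow : (#s).choose (#s / 2) * 2 ^ (Fintype.card n - #s) ≤
      (#R).choose (#R / 2) * 2 ^ (Fintype.card n - #R) := by
    have hs : #s ≤ Fintype.card n := card_le_univ s
    calc (#s).choose (#s / 2) * 2 ^ (Fintype.card n - #s)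
        ≤ 2 * (#R).choose (#R / 2) * 2 ^ (Fintype.card n - #s) := by
          gcongr
          exact hsR ▸ Nat.choose_succ_half_le_two_mul _
      _ = (#R).choose (#R / 2) * 2 ^ (Fintype.card n - #R) := by
          rw [show Fintype.card n - #R = Fintype.card n - #s + 1 by omega, pow_succ]
          ring
  calc #{M : Matrix m n Bool | (bmToR M).IsCircuitCertificate s R}
      ≤ ((#s).choose (#s / 2) * 2 ^ (Fintype.card n - #s)) ^ (Fintype.card m - #R) *
          #(univ : Finset (R → n → Bool)) :=
        card_le_mul_card_image_of_maps_to (fun M _ => mem_univ fun i : R => M i) _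
          fun P _ => by simpa [filter_filter] using card_isCircuitCertificate_fiber_le hsR P
    _ ≤ ((#R).choose (#R / 2) * 2 ^ (Fintype.card n - #R)) ^ (Fintype.card m - #R) *
          #(univ : Finset (R → n → Bool)) := by gcongr
    _ = _ := by
        rw [card_univ, Fintype.card_fun, Fintype.card_fun, Fintype.card_bool, Fintype.card_coe,
          ← pow_mul, mul_comm, mul_comm (Fintype.card n)]

end Counting

theorem two_pow_mul_div_two_pow_eq (k m : ℕ) (x : ℝ) :
    2 ^ (k * (k + m)) * (x * 2 ^ m) ^ m / 2 ^ ((k + m) * (k + m)) =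
      ((2 : ℝ) ^ (-(k : ℤ)) * x) ^ m := by
  rw [_root_.zpow_neg, zpow_natCast, mul_pow, mul_pow, inv_pow, ← pow_mul, ← pow_mul]
  field_simp
  ring

/-- For a random `d × d` 0/1-matrix and any `k ≤ d - 1`, the probability that some `k + 1`
columns have strong rank exactly `k` is at most
`C(d,k) · C(d,k+1) · (2^{-k} C(k, ⌊k/2⌋))^{d-k}`. -/
theorem stmt6 (d k : ℕ) (hk : k + 1 ≤ d) :
    ((Finset.univ.filter (fun M : Matrix (Fin d) (Fin d) Bool =>
        ∃ s : Finset (Fin d), s.card = k + 1 ∧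
          (∀ t ⊆ s, t.card = k →
            LinearIndependent ℝ (fun j : {x // x ∈ t} => (bmToR M)ᵀ j.1)) ∧
          ¬ LinearIndependent ℝ (fun j : {x // x ∈ s} => (bmToR M)ᵀ j.1))).card : ℝ)
      / 2 ^ (d * d)
      ≤ (d.choose k : ℝ) * (d.choose (k + 1)) *
          ((2 : ℝ) ^ (-(k : ℤ)) * (k.choose (k / 2))) ^ (d - k) := by
  obtain ⟨m, rfl⟩ : ∃ m, d = k + m := ⟨d - k, by omega⟩
  rw [Nat.add_sub_cancel_left, ← two_pow_mul_div_two_pow_eq, mul_div_assoc']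
  gcongr
  norm_cast
  calc _ ≤ #((powersetCard (k + 1) univ).biUnion fun s => (powersetCard k univ).biUnion fun R =>
          {M : Matrix (Fin (k + m)) (Fin (k + m)) Bool | (bmToR M).IsCircuitCertificate s R}) := by
        refine card_le_card fun M hM => ?_
        obtain ⟨s, hs, hind, hdep⟩ := (mem_filter.1 hM).2
        obtain ⟨R, hR, hcert⟩ := (bmToR M).exists_isCircuitCertificate hdep
          fun j hj => hind _ (erase_subset j s) (by rw [card_erase_of_mem hj, hs]; rfl)
        simp only [mem_biUnion, mem_powersetCard, subset_univ, true_and, mem_filter, mem_univ]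
        exact ⟨s, hs, R, by omega, hcert⟩
    _ ≤ #(powersetCard (k + 1) (univ : Finset (Fin (k + m)))) *
          (#(powersetCard k (univ : Finset (Fin (k + m)))) *
            (2 ^ (k * (k + m)) * (k.choose (k / 2) * 2 ^ m) ^ m)) :=
        card_biUnion_le_card_mul _ _ _ fun s hs => card_biUnion_le_card_mul _ _ _ fun R hR => by
          rw [mem_powersetCard] at hs hR
          have := card_isCircuitCertificate_le (by omega : #R + 1 = #s)
          rwa [hR.2, Fintype.card_fin, Nat.add_sub_cancel_left] at this
    _ = _ := by rw [card_powersetCard, card_powersetCard, card_univ, Fintype.card_fin]; ring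
end
end

section
/- There exists d_0 such that for all d ≥ d_0: Σ_{k=3}^{⌊d − 3d/ln(d)⌋} C(d,k) · C(d,k+1) · (2^{-k} C(k, ⌊k/2⌋))^{d−k} ≤ 2^{-d}. -/
/-!
There are at most `d` summands, and each is at most `2^{-d} / d`; this is shown on a
logarithmic scale, with `r k = C(k, ⌊k/2⌋) / 2^k` satisfying `r k ≤ 3/8` and `r k ≤ k^{-1/2}`.
* For `16 k log d ≤ d` the binomials contribute at most `d^{2k+1} ≤ e^{d/8 + log d}`,
  while `(3/8)^{d-k}` decays faster than `2^{-d}` by a fixed exponential factor.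
* For larger `k ≤ d/2` the binomials are at most `4^d`, but `log k ≥ (1 - o(1)) log d`
  and `d - k ≥ d/2`, so `r k ^ (d - k) ≤ d^{-(1/4 - o(1)) d}`.
* For `k > d/2` put `m = d - k ≥ 3d / log d`. Then `C(d, k + 1) ≤ C(d, k) ≤ (e d/m)^m
  ≤ (e log d)^m` and `r k ^ m ≤ (2/d)^{m/2}`, so the summand is at most
  `d^{-(1/2 - o(1)) m} ≤ e^{-(3/2 - o(1)) d}`.
-/

open Real Filter Finset

namespace Nat

theorem choose_succ_div_two_le (k : ℕ) : (k + 1).choose ((k + 1) / 2) ≤ 2 * k.choose (k / 2) := by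
  rcases k.eq_zero_or_pos with rfl | hk
  · simp
  obtain ⟨j, hj⟩ : ∃ j, (k + 1) / 2 = j + 1 := ⟨(k + 1) / 2 - 1, by omega⟩
  rw [hj, choose_succ_succ]
  linarith [choose_le_middle j k, choose_le_middle (j + 1) k]

theorem eight_mul_choose_div_two_le (k : ℕ) (hk : 3 ≤ k) : 8 * k.choose (k / 2) ≤ 3 * 2 ^ k := by
  induction k, hk using le_induction with
  | base => decide
  | succ k _ ih => rw [pow_succ]; linarith [choose_succ_div_two_le k]

theorem two_mul_add_one_mul_centralBinom_sq_le (n : ℕ) :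
    (2 * n + 1) * n.centralBinom ^ 2 ≤ 16 ^ n := by
  induction n with
  | zero => simp
  | succ n ih =>
    refine Nat.le_of_mul_le_mul_right (c := (n + 1) ^ 2) ?_ (by positivity)
    calc (2 * (n + 1) + 1) * (n + 1).centralBinom ^ 2 * (n + 1) ^ 2
        = (2 * n + 3) * ((n + 1) * (n + 1).centralBinom) ^ 2 := by ring
      _ = 4 * ((2 * n + 3) * (2 * n + 1)) * ((2 * n + 1) * n.centralBinom ^ 2) := by
        rw [succ_mul_centralBinom_succ]; ring
      _ ≤ 4 * (2 * n + 2) ^ 2 * 16 ^ n := Nat.mul_le_mul (by nlinarith) ih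
      _ = 16 ^ (n + 1) * (n + 1) ^ 2 := by ring

theorem mul_choose_div_two_sq_le (k : ℕ) : k * k.choose (k / 2) ^ 2 ≤ 4 ^ k := by
  obtain ⟨n, rfl | rfl⟩ := k.even_or_odd'
  · have hcb := two_mul_add_one_mul_centralBinom_sq_le n
    rw [centralBinom_eq_two_mul_choose] at hcb
    rw [show 2 * n / 2 = n by omega, pow_mul]
    calc 2 * n * (2 * n).choose n ^ 2 ≤ (2 * n + 1) * (2 * n).choose n ^ 2 := by gcongr; omega
      _ ≤ 16 ^ n := hcb
      _ = (4 ^ 2) ^ n := by norm_num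
  · have hcb := two_mul_add_one_mul_centralBinom_sq_le n
    have hsucc := choose_succ_div_two_le (2 * n)
    rw [centralBinom_eq_two_mul_choose] at hcb
    rw [show (2 * n + 1) / 2 = n by omega] at hsucc ⊢
    rw [show 2 * n / 2 = n by omega] at hsucc
    calc (2 * n + 1) * (2 * n + 1).choose n ^ 2 ≤ (2 * n + 1) * (2 * (2 * n).choose n) ^ 2 := by
          gcongr
      _ = 4 * ((2 * n + 1) * (2 * n).choose n ^ 2) := by ring
      _ ≤ 4 * 16 ^ n := by gcongr
      _ = 4 ^ (2 * n + 1) := by rw [pow_succ, pow_mul]; norm_num; ring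

theorem choose_succ_le_choose {n k : ℕ} (h : n ≤ 2 * k) : n.choose (k + 1) ≤ n.choose k := by
  rcases lt_or_ge n (k + 1) with hn | hn
  · simp [choose_eq_zero_of_lt hn]
  rw [← choose_symm hn, ← choose_symm (by omega : k ≤ n),
    show n - k = n - (k + 1) + 1 by omega]
  exact choose_le_succ_of_lt_half_left (by omega)

end Nat

noncomputable def halfChooseRatio (k : ℕ) : ℝ := k.choose (k / 2) / 2 ^ k

theorem halfChooseRatio_pos (k : ℕ) : 0 < halfChooseRatio k := by
  unfold halfChooseRatio
  have := Nat.choose_pos (Nat.div_le_self k 2)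
  positivity

theorem log_halfChooseRatio_le_neg_log_div_two (k : ℕ) :
    log (halfChooseRatio k) ≤ -log k / 2 := by
  rcases k.eq_zero_or_pos with rfl | hk
  · simp [halfChooseRatio]
  have hsq : (k : ℝ) * halfChooseRatio k ^ 2 ≤ 1 := by
    have h : (k : ℝ) * k.choose (k / 2) ^ 2 ≤ 4 ^ k := by exact_mod_cast Nat.mul_choose_div_two_sq_le k
    have h4 : ((2 : ℝ) ^ k) ^ 2 = 4 ^ k := by rw [← pow_mul, mul_comm, pow_mul]; norm_num
    rwa [halfChooseRatio, div_pow, h4, mul_div_assoc', div_le_one (by positivity)]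
  have := log_le_log (by have := halfChooseRatio_pos k; positivity) hsq
  rw [log_mul (by positivity) (pow_pos (halfChooseRatio_pos k) 2).ne', log_pow, log_one] at this
  push_cast at this
  linarith

theorem log_halfChooseRatio_le_of_three_le {k : ℕ} (hk : 3 ≤ k) :
    log (halfChooseRatio k) ≤ -(7 / 5 * log 2) := by
  have hratio : halfChooseRatio k ≤ 3 / 2 ^ 3 := by
    rw [halfChooseRatio, div_le_div_iff₀ (by positivity) (by positivity)]
    have := Nat.eight_mul_choose_div_two_le k hk
    rw [show (2 : ℝ) ^ k = (2 ^ k : ℕ) by norm_cast]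
    exact_mod_cast (by linarith : k.choose (k / 2) * 2 ^ 3 ≤ 3 * 2 ^ k)
  have hlog3 : log 3 ≤ 8 / 5 * log 2 := by
    have := log_le_log (by norm_num) (by norm_num : (3 : ℝ) ^ 5 ≤ 2 ^ 8)
    rw [log_pow, log_pow] at this
    push_cast at this
    linarith
  have := log_le_log (halfChooseRatio_pos k) hratio
  rw [log_div (by norm_num) (by norm_num), log_pow] at this
  push_cast at this
  linarith

theorem log_natCast_le_log_natCast {a b : ℕ} (h : a ≤ b) : log a ≤ log b := by
  rcases a.eq_zero_or_pos with rfl | ha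
  · simpa using log_natCast_nonneg b
  · exact log_le_log (by exact_mod_cast ha) (by exact_mod_cast h)

theorem log_choose_le_mul_log (n k : ℕ) : log (n.choose k) ≤ k * log n := by
  simpa using log_natCast_le_log_natCast (Nat.choose_le_pow n k)

theorem log_choose_le_mul_log_two (n k : ℕ) : log (n.choose k) ≤ n * log 2 := by
  simpa using log_natCast_le_log_natCast (Nat.choose_le_two_pow n k)

theorem Nat.choose_le_exp_mul_div_pow (n m : ℕ) : (n.choose m : ℝ) ≤ (exp 1 * n / m) ^ m := by
  rcases m.eq_zero_or_pos with rfl | hm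
  · simp
  have hm' : (0 : ℝ) < m := by exact_mod_cast hm
  calc (n.choose m : ℝ) ≤ n ^ m / m.factorial := Nat.choose_le_pow_div m n
    _ = (n / m) ^ m * ((m : ℝ) ^ m / m.factorial) := by rw [div_pow]; field_simp
    _ ≤ (n / m) ^ m * exp m := by gcongr; exact pow_div_factorial_le_exp _ hm'.le m
    _ = (exp 1 * n / m) ^ m := by rw [← exp_one_pow]; ring

theorem log_choose_le_mul_one_add_log_div {n m : ℕ} (hm : 0 < m) (hmn : m ≤ n) :
    log (n.choose m) ≤ m * (1 + log n - log m) := by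
  have hm' : (0 : ℝ) < m := by exact_mod_cast hm
  have hn' : (0 : ℝ) < n := by exact_mod_cast hm.trans_le hmn
  have := log_le_log (by exact_mod_cast Nat.choose_pos hmn) (Nat.choose_le_exp_mul_div_pow n m)
  rwa [log_pow, log_div (by positivity) hm'.ne', log_mul (exp_pos 1).ne' hn'.ne', log_exp] at this

theorem eventually_log_bounds :
    ∀ᶠ d : ℕ in atTop, 100 ≤ log d ∧ log d ≤ d / 100 ∧ log (log d) ≤ log d / 100 := by
  have hlog : Tendsto (fun d : ℕ => log d) atTop atTop :=
    tendsto_log_atTop.comp tendsto_natCast_atTop_atTop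
  have hsmall : ∀ᶠ x : ℝ in atTop, log x ≤ x / 100 := by
    filter_upwards [isLittleO_log_id_atTop.bound (by norm_num : (0 : ℝ) < 1 / 100),
      eventually_ge_atTop 0] with x hx hx0
    rw [Real.norm_eq_abs, id, Real.norm_of_nonneg hx0] at hx
    linarith [le_abs_self (log x)]
  filter_upwards [hlog.eventually_ge_atTop 100, tendsto_natCast_atTop_atTop.eventually hsmall,
    hlog.eventually hsmall] with d h1 h2 h3
  exact ⟨h1, h2, h3⟩

noncomputable def logSummand (d k : ℕ) : ℝ :=
  log (d.choose k) + log (d.choose (k + 1)) + ((d : ℝ) - k) * log (halfChooseRatio k)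

section Regimes

variable {d k : ℕ}

theorem logSummand_le_of_mul_log_le (hk : 3 ≤ k) (hL : 1 ≤ log d) (hLd : log d ≤ d / 100)
    (hkL : 16 * k * log d ≤ d) : logSummand d k ≤ -(d * log 2 + log d) := by
  have hk16 : (k : ℝ) ≤ d / 16 := by nlinarith
  have hchoose := log_choose_le_mul_log d k
  have hchoose' := log_choose_le_mul_log d (k + 1)
  have hratio := mul_le_mul_of_nonneg_left (log_halfChooseRatio_le_of_three_le hk)
    (by linarith : (0 : ℝ) ≤ d - k)
  push_cast at hchoose'
  unfold logSummand
  nlinarith [Real.log_two_gt_d9, Real.log_two_lt_d9]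

theorem logSummand_le_of_lt_mul_log (hL : 100 ≤ log d) (hLd : log d ≤ d / 100)
    (hLL : log (log d) ≤ log d / 100) (hkL : d < 16 * k * log d) (hkd : 2 * k ≤ d) :
    logSummand d k ≤ -(d * log 2 + log d) := by
  have hk : (0 : ℝ) < k := by
    by_contra! hk
    nlinarith [Nat.cast_nonneg (α := ℝ) d, Nat.cast_nonneg (α := ℝ) k]
  have hlogk : log d - 4 * log 2 - log (log d) ≤ log k := by
    have := log_le_log (by linarith) hkL.le
    rw [log_mul (by positivity) (by linarith), log_mul (by norm_num) hk.ne',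
      show (16 : ℝ) = 2 ^ 4 by norm_num, log_pow] at this
    push_cast at this
    linarith
  have hkd' : (2 * k : ℝ) ≤ d := by exact_mod_cast hkd
  have hratio : ((d : ℝ) - k) * log (halfChooseRatio k) ≤ (d / 2) * (-log k / 2) :=
    calc ((d : ℝ) - k) * log (halfChooseRatio k) ≤ ((d : ℝ) - k) * (-log k / 2) :=
          mul_le_mul_of_nonneg_left (log_halfChooseRatio_le_neg_log_div_two k) (by linarith)
      _ ≤ (d / 2) * (-log k / 2) := by nlinarith [Real.log_two_lt_d9]
  have hchoose := log_choose_le_mul_log_two d k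
  have hchoose' := log_choose_le_mul_log_two d (k + 1)
  unfold logSummand
  nlinarith [Real.log_two_gt_d9, Real.log_two_lt_d9]

theorem logSummand_le_of_half_lt (hL : 100 ≤ log d) (hLd : log d ≤ d / 100)
    (hLL : log (log d) ≤ log d / 100) (hkd : d < 2 * k) (hk : (k : ℝ) ≤ d - 3 * d / log d) :
    logSummand d k ≤ -(d * log 2 + log d) := by
  have hd : (0 : ℝ) < d := by linarith
  have hkd' : k < d := by
    have : 0 < 3 * d / log d := by positivity
    exact_mod_cast (by linarith : (k : ℝ) < d)
  have hgap : 3 * d / log d ≤ ((d - k : ℕ) : ℝ) := by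
    rw [Nat.cast_sub hkd'.le]
    linarith
  set m := d - k with hm
  have hmL : 3 * d ≤ m * log d := by rwa [div_le_iff₀ (by linarith)] at hgap
  have hm0 : (0 : ℝ) < m := lt_of_lt_of_le (by positivity) hgap
  have hlogm : log d - log (log d) ≤ log m := by
    have := log_le_log (by positivity) hgap
    rw [log_div (by positivity) (by linarith), log_mul (by norm_num) hd.ne'] at this
    linarith [log_nonneg (by norm_num : (1 : ℝ) ≤ 3)]
  have hchoose : log (d.choose k) ≤ m * (1 + log (log d)) := by
    rw [← Nat.choose_symm (by omega : k ≤ d)]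
    refine (log_choose_le_mul_one_add_log_div (by exact_mod_cast hm0) (by omega)).trans ?_
    exact mul_le_mul_of_nonneg_left (by linarith) hm0.le
  have hchoose' : log (d.choose (k + 1)) ≤ log (d.choose k) :=
    log_natCast_le_log_natCast (Nat.choose_succ_le_choose hkd.le)
  have hlogk : log d - log 2 ≤ log k := by
    have hk0 : (0 : ℝ) < k := by exact_mod_cast (by omega : 0 < k)
    have := log_le_log hd (by exact_mod_cast hkd.le : ((d : ℕ) : ℝ) ≤ (2 * k : ℕ))
    push_cast at this
    rw [log_mul (by norm_num) hk0.ne'] at this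
    linarith
  have hratio : ((d : ℝ) - k) * log (halfChooseRatio k) ≤ m * (-(log d - log 2) / 2) := by
    rw [hm, Nat.cast_sub hkd'.le]
    refine mul_le_mul_of_nonneg_left ((log_halfChooseRatio_le_neg_log_div_two k).trans ?_) ?_
    · linarith
    · exact sub_nonneg.2 (by exact_mod_cast hkd'.le)
  unfold logSummand
  nlinarith [Real.log_two_gt_d9, Real.log_two_lt_d9]

theorem logSummand_le (hL : 100 ≤ log d) (hLd : log d ≤ d / 100)
    (hLL : log (log d) ≤ log d / 100) (hk : 3 ≤ k) (hkd : (k : ℝ) ≤ d - 3 * d / log d) :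
    logSummand d k ≤ -(d * log 2 + log d) := by
  rcases le_or_gt (16 * k * log d) d with hsmall | hsmall
  · exact logSummand_le_of_mul_log_le hk (by linarith) hLd hsmall
  rcases le_or_gt (2 * k) d with hhalf | hhalf
  · exact logSummand_le_of_lt_mul_log hL hLd hLL hsmall hhalf
  · exact logSummand_le_of_half_lt hL hLd hLL hhalf hkd

theorem choose_mul_choose_mul_pow_eq_exp_logSummand (hkd : k + 1 ≤ d) :
    (d.choose k : ℝ) * d.choose (k + 1) * halfChooseRatio k ^ (d - k) = exp (logSummand d k) := by
  rw [logSummand, exp_add, exp_add, ← Nat.cast_sub (by omega), ← log_pow,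
    exp_log (by exact_mod_cast Nat.choose_pos (by omega)),
    exp_log (by exact_mod_cast Nat.choose_pos hkd), exp_log (pow_pos (halfChooseRatio_pos k) _)]

theorem choose_mul_choose_mul_pow_le (hL : 100 ≤ log d) (hLd : log d ≤ d / 100)
    (hLL : log (log d) ≤ log d / 100) (hk : 3 ≤ k) (hkd : (k : ℝ) ≤ d - 3 * d / log d) :
    (d.choose k : ℝ) * d.choose (k + 1) * halfChooseRatio k ^ (d - k) ≤ 1 / 2 ^ d / d := by
  have hd : (0 : ℝ) < d := by linarith
  have hk1 : k + 1 ≤ d := by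
    have : 1 ≤ 3 * d / log d := by rw [le_div_iff₀ (by linarith)]; linarith
    exact_mod_cast (by linarith : (k : ℝ) + 1 ≤ d)
  rw [choose_mul_choose_mul_pow_eq_exp_logSummand hk1]
  calc exp (logSummand d k) ≤ exp (-(d * log 2 + log d)) :=
        exp_le_exp.2 (logSummand_le hL hLd hLL hk hkd)
    _ = 1 / 2 ^ d / d := by
      rw [exp_neg, exp_add, ← log_pow, exp_log (by positivity), exp_log hd]
      field_simp

end Regimes

/-- For all sufficiently large `d`,
`∑_{k=3}^{⌊d - 3d/ln d⌋} C(d,k) C(d,k+1) (2^{-k} C(k,⌊k/2⌋))^{d-k} ≤ 2^{-d}`. -/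
theorem stmt7 : ∃ d0 : ℕ, ∀ d : ℕ, d0 ≤ d →
    ∑ k ∈ Finset.Icc 3 (Nat.floor ((d : ℝ) - 3 * d / Real.log d)),
        (d.choose k : ℝ) * (d.choose (k + 1)) *
          ((2 : ℝ) ^ (-(k : ℤ)) * (k.choose (k / 2))) ^ (d - k)
      ≤ 1 / 2 ^ d := by
  obtain ⟨d0, hd0⟩ := eventually_atTop.1 eventually_log_bounds
  refine ⟨d0, fun d hd => ?_⟩
  obtain ⟨hL, hLd, hLL⟩ := hd0 d hd
  set K := ⌊(d : ℝ) - 3 * d / log d⌋₊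
  have hKd : K ≤ d := Nat.floor_le_of_le (by
    have : 0 ≤ 3 * d / log d := by positivity
    linarith)
  calc _ ≤ ∑ _k ∈ Icc 3 K, 1 / 2 ^ d / (d : ℝ) := by
        refine sum_le_sum fun k hk => ?_
        rw [mem_Icc] at hk
        rw [zpow_neg, zpow_natCast, inv_mul_eq_div]
        exact choose_mul_choose_mul_pow_le hL hLd hLL hk.1
          ((Nat.le_floor_iff' (by omega)).1 hk.2)
    _ = #(Icc 3 K) * (1 / 2 ^ d / d) := by rw [sum_const, nsmul_eq_mul]
    _ ≤ d * (1 / 2 ^ d / d) := by gcongr; rw [Nat.card_Icc]; omega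
    _ = 1 / 2 ^ d := by field_simp [show (d : ℝ) ≠ 0 by linarith]
end

section
/- Let R(d) be the set of nonsingular d×d 0/1-matrices. Then |R(d)| = |G(d)| · d! · (2^d − E(d))/d for all d ≥ 2. -/
open scoped Classical
open Filter Matrix

noncomputable section

/-- A 0/1-vector (with `Bool` entries) viewed as a vector in `ℝ^d`. -/
def bvToR {d : ℕ} (v : Fin d → Bool) : Fin d → ℝ := fun i => if v i then 1 else 0

/-- `Gset d` is the set of all linearly independent `(d-1)`-element sets of 0/1-vectors in `ℝ^d`. -/
def Gset (d : ℕ) : Finset (Finset (Fin d → Bool)) :=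
  Finset.univ.filter (fun G => G.card = d - 1 ∧
    LinearIndependent ℝ (fun v : {x // x ∈ G} => bvToR v.1))

/-- `vnum S` is the number of 0/1-vectors in the linear span of the set `S` of 0/1-vectors. -/
def vnum {d : ℕ} (S : Finset (Fin d → Bool)) : ℕ :=
  (Finset.univ.filter (fun x : Fin d → Bool =>
    bvToR x ∈ Submodule.span ℝ (bvToR '' (S : Set (Fin d → Bool))))).card

/-- `Ed d` is the expected number of 0/1-points on the hyperplane spanned by a uniformly
random linearly independent set of `d - 1` 0/1-vectors. -/
def Ed (d : ℕ) : ℝ := (∑ G ∈ Gset d, (vnum G : ℝ)) / (Gset d).card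


/-!
Peeling off the first row, a nonsingular matrix is a linearly independent `(d-1)`-tuple of rows
together with a 0/1-vector outside their span. For a fixed tuple there are `2^d - v(G)` such
vectors, where `G` is the set of its entries, and each `G ∈ G(d)` arises from exactly `(d-1)!`
tuples. Hence `|R(d)| = (d-1)! · Σ_{G ∈ G(d)} (2^d - v(G)) = (d-1)! · |G(d)| · (2^d - E(d))`.
-/

theorem Finset.image_eq_iff_exists_equiv {α : Type*} {n : ℕ} {g : Fin n → α} {G : Finset α}
    (hG : G.card = n) :
    Finset.univ.image g = G ↔ ∃ e : Fin n ≃ G, Subtype.val ∘ e = g := by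
  constructor
  · intro h
    let f : Fin n → G := fun i => ⟨g i, h ▸ Finset.mem_image_of_mem g (Finset.mem_univ i)⟩
    have hf : Function.Surjective f := by
      rintro ⟨x, hx⟩
      obtain ⟨i, -, rfl⟩ := Finset.mem_image.mp (h ▸ hx)
      exact ⟨i, rfl⟩
    have hbij : Function.Bijective f :=
      (Fintype.bijective_iff_surjective_and_card f).2 ⟨hf, by simp [hG]⟩
    exact ⟨Equiv.ofBijective f hbij, rfl⟩
  · rintro ⟨e, rfl⟩
    ext x
    simp only [Finset.mem_image, Finset.mem_univ, true_and]
    exact ⟨fun ⟨i, hi⟩ => hi ▸ (e i).2, fun hx => ⟨e.symm ⟨x, hx⟩, by simp⟩⟩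

section Counting

variable {K V α : Type*} [Field K] [AddCommGroup V] [Module K V]

theorem linearIndependent_comp_iff_of_image_eq {v : α → V} {n : ℕ} {g : Fin n → α}
    {G : Finset α} (hG : G.card = n) (h : Finset.univ.image g = G) :
    LinearIndependent K (v ∘ g) ↔ LinearIndependent K (fun x : G => v x) := by
  obtain ⟨e, rfl⟩ := (Finset.image_eq_iff_exists_equiv hG).1 h
  exact linearIndependent_equiv (R := K) (f := fun x : G => v x) e

theorem LinearIndependent.card_image_fin {v : α → V} {n : ℕ} {g : Fin n → α}
    (h : LinearIndependent K (v ∘ g)) : (Finset.univ.image g).card = n := by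
  rw [Finset.card_image_of_injective _ h.injective.of_comp, Finset.card_fin]

variable [Fintype α]

theorem card_filter_image_eq (n : ℕ) {G : Finset α} (hG : G.card = n) :
    (Finset.univ.filter (fun g : Fin n → α => Finset.univ.image g = G)).card
      = n.factorial := by
  symm
  calc n.factorial = (Finset.univ : Finset (Fin n ≃ G)).card := by
        rw [Finset.card_univ, Fintype.card_equiv (Fintype.equivFinOfCardEq (by simp [hG])).symm,
          Fintype.card_fin]
    _ = _ := by
      refine Finset.card_nbij (fun e => Subtype.val ∘ e) ?_ ?_ ?_
      · intro e _
        exact Finset.mem_filter.2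
          ⟨Finset.mem_univ _, (Finset.image_eq_iff_exists_equiv hG).2 ⟨e, rfl⟩⟩
      · intro e₁ _ e₂ _ h
        ext i
        exact congrFun h i
      · intro g hg
        obtain ⟨e, he⟩ := (Finset.image_eq_iff_exists_equiv hG).1 (Finset.mem_filter.1 hg).2
        exact ⟨e, Finset.mem_coe.2 (Finset.mem_univ e), he⟩

variable (K) in
def independentFinsets (v : α → V) (n : ℕ) : Finset (Finset α) :=
  Finset.univ.filter (fun G => G.card = n ∧ LinearIndependent K (fun x : G => v x))

theorem sum_linearIndependent_fin_eq {M : Type*} [AddCommMonoid M] (v : α → V) (n : ℕ)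
    (c : Finset α → M) :
    ∑ g ∈ Finset.univ.filter (fun g : Fin n → α => LinearIndependent K (v ∘ g)),
        c (Finset.univ.image g)
      = ∑ G ∈ independentFinsets K v n, n.factorial • c G := by
  have hmaps : ∀ g ∈ Finset.univ.filter (fun g : Fin n → α => LinearIndependent K (v ∘ g)),
      Finset.univ.image g ∈ independentFinsets K v n := by
    intro g hg
    have hli := (Finset.mem_filter.1 hg).2
    exact Finset.mem_filter.2 ⟨Finset.mem_univ _, hli.card_image_fin,
      (linearIndependent_comp_iff_of_image_eq hli.card_image_fin rfl).1 hli⟩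
  rw [← Finset.sum_fiberwise_of_maps_to hmaps]
  refine Finset.sum_congr rfl fun G hG => ?_
  obtain ⟨hGcard, hGli⟩ := (Finset.mem_filter.1 hG).2
  have hfiber :
      (Finset.univ.filter (fun g : Fin n → α => LinearIndependent K (v ∘ g))).filter
          (fun g => Finset.univ.image g = G)
        = Finset.univ.filter (fun g => Finset.univ.image g = G) := by
    ext g
    simp only [Finset.mem_filter, Finset.mem_univ, true_and, and_iff_right_iff_imp]
    exact fun h => (linearIndependent_comp_iff_of_image_eq hGcard h).2 hGli
  rw [hfiber, Finset.sum_congr rfl fun g hg => by rw [(Finset.mem_filter.1 hg).2],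
    Finset.sum_const, card_filter_image_eq n hGcard]

theorem card_linearIndependent_fin_succ (v : α → V) (n : ℕ) :
    (Finset.univ.filter (fun M : Fin (n + 1) → α => LinearIndependent K (v ∘ M))).card
      = ∑ g ∈ Finset.univ.filter (fun g : Fin n → α => LinearIndependent K (v ∘ g)),
          (Finset.univ.filter (fun x => v x ∉ Submodule.span K (Set.range (v ∘ g)))).card := by
  rw [Finset.card_filter, ← (Fin.consEquiv fun _ => α).sum_comp, Fintype.sum_prod_type_right,
    Finset.sum_filter]
  refine Finset.sum_congr rfl fun g _ => ?_
  have hcons : ∀ x, v ∘ Fin.consEquiv (fun _ => α) (x, g) = Fin.cons (v x) (v ∘ g) :=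
    fun x => Fin.comp_cons v x g
  simp only [hcons, linearIndependent_finCons]
  split_ifs with hg
  · simp [hg, Finset.card_filter]
  · simp [hg]

theorem card_linearIndependent_fin_succ_eq_sum (v : α → V) (n : ℕ) :
    (Finset.univ.filter (fun M : Fin (n + 1) → α => LinearIndependent K (v ∘ M))).card
      = ∑ G ∈ independentFinsets K v n,
          n.factorial * (Finset.univ.filter (fun x => v x ∉ Submodule.span K (v '' G))).card := by
  simp_rw [card_linearIndependent_fin_succ, ← smul_eq_mul, ← sum_linearIndependent_fin_eq]
  refine Finset.sum_congr rfl fun g _ => ?_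
  rw [Finset.coe_image, Finset.coe_univ, Set.image_univ, Set.range_comp]

end Counting

theorem det_bmToR_ne_zero_iff {d : ℕ} (M : Matrix (Fin d) (Fin d) Bool) :
    (bmToR M).det ≠ 0 ↔ LinearIndependent ℝ (bvToR ∘ M) := by
  rw [← isUnit_iff_ne_zero, ← Matrix.isUnit_iff_isUnit_det,
    ← Matrix.linearIndependent_rows_iff_isUnit]
  rfl

theorem card_det_bmToR_ne_zero (d : ℕ) :
    (Finset.univ.filter (fun M : Matrix (Fin d) (Fin d) Bool => (bmToR M).det ≠ 0)).card
      = (Finset.univ.filter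
          (fun M : Fin d → Fin d → Bool => LinearIndependent ℝ (bvToR ∘ M))).card := by
  simp only [det_bmToR_ne_zero_iff]
  rfl

theorem Gset_succ (n : ℕ) : Gset (n + 1) = independentFinsets ℝ bvToR n := by
  simp [Gset, independentFinsets]

theorem card_filter_not_mem_span_eq {d : ℕ} (G : Finset (Fin d → Bool)) :
    ((Finset.univ.filter
        (fun x => bvToR x ∉ Submodule.span ℝ (bvToR '' (G : Set (Fin d → Bool))))).card : ℝ)
      = 2 ^ d - vnum G := by
  rw [vnum, eq_sub_iff_add_eq, ← Nat.cast_add, add_comm, Finset.card_filter_add_card_filter_not]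
  simp

theorem card_det_bmToR_ne_zero_eq_sum (n : ℕ) :
    ((Finset.univ.filter
        (fun M : Matrix (Fin (n + 1)) (Fin (n + 1)) Bool => (bmToR M).det ≠ 0)).card : ℝ)
      = n.factorial *
          ((Gset (n + 1)).card * 2 ^ (n + 1) - ∑ G ∈ Gset (n + 1), (vnum G : ℝ)) := by
  rw [card_det_bmToR_ne_zero, card_linearIndependent_fin_succ_eq_sum, ← Gset_succ]
  push_cast
  simp only [card_filter_not_mem_span_eq, ← Finset.mul_sum, Finset.sum_sub_distrib,
    Finset.sum_const, nsmul_eq_mul]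

/-- The number of nonsingular `d × d` 0/1-matrices equals `|G(d)| · d! · (2^d - E(d)) / d`. -/
theorem stmt8 (d : ℕ) (hd : 2 ≤ d) :
    ((Finset.univ.filter (fun M : Matrix (Fin d) (Fin d) Bool => (bmToR M).det ≠ 0)).card : ℝ)
      = ((Gset d).card : ℝ) * d.factorial * ((2 ^ d - Ed d) / d) := by
  obtain ⟨n, rfl⟩ : ∃ n, d = n + 1 := ⟨d - 1, by omega⟩
  rw [card_det_bmToR_ne_zero_eq_sum, Ed]
  rcases eq_or_ne (Gset (n + 1)) ∅ with hG | hG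
  · simp [hG]
  · have hN : ((Gset (n + 1)).card : ℝ) ≠ 0 := by simpa [Finset.nonempty_iff_ne_empty] using hG
    field_simp
    push_cast [Nat.factorial_succ]
    ring
end
end

section
/- Let S_1(d) be the set of d×d 0/1-matrices M with rank(M) = d−1 and strong rank 1. Then |S_1(d)| = |G(d)| · (d!/2) · (d−1) for all d ≥ 2. -/
open scoped Classical
open Filter Matrix

noncomputable section

/-- The strong rank of a real `d × d` matrix: the largest `k ≤ d` such that every
`k`-element subset of the columns is linearly independent. -/
def strongRank {d : ℕ} (M : Matrix (Fin d) (Fin d) ℝ) : ℕ :=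
  sSup {k | k ≤ d ∧ ∀ s : Finset (Fin d), s.card = k →
    LinearIndependent ℝ (fun j : {x // x ∈ s} => Mᵀ j.1)}

/-!
Since distinct nonzero 0/1-vectors are never proportional, a 0/1-matrix has strong rank 1 exactly
when its columns are nonzero and two of them coincide. Together with rank `d - 1` this says that the
set `G` of columns is a linearly independent `(d - 1)`-set, i.e. the column map `Fin d → G` is a
surjection onto some `G ∈ G(d)`. A surjection `f` from a `d`-set onto a `(d - 1)`-set identifies
exactly one pair of points, and `f` is injective off a point `a` iff `a` is one of them. Counting the
pairs `(f, a)` with `f` injective off `a` both ways gives `2 · #surjections = d · (d - 1)! · (d - 1)`.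
-/

open Finset Function

lemma Nat.sSup_eq_iff_of_isLowerSet {S : Set ℕ} (hS : IsLowerSet S) (hne : S.Nonempty)
    (hbdd : BddAbove S) (n : ℕ) : sSup S = n ↔ n ∈ S ∧ n + 1 ∉ S := by
  constructor
  · rintro rfl
    exact ⟨Nat.sSup_mem hne hbdd, fun h => (le_csSup hbdd h).not_gt (Nat.lt_succ_self _)⟩
  · rintro ⟨hn, hn1⟩
    refine le_antisymm (csSup_le hne fun k hk => ?_) (le_csSup hbdd hn)
    by_contra! hlt
    exact hn1 (hS hlt hk)

section Surjections

variable {α β : Type*} [Fintype α] [Fintype β]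

lemma Fintype.card_subtype_ne (a : α) : Fintype.card {x // x ≠ a} = Fintype.card α - 1 := by
  simp [Fintype.card_subtype_compl]

lemma Function.Surjective.of_injective_restrict_ne (hcard : Fintype.card α = Fintype.card β + 1)
    {f : α → β} {a : α} (hf : Injective fun x : {x // x ≠ a} => f x) : Surjective f := by
  have hbij := (Fintype.bijective_iff_injective_and_card _).2
    ⟨hf, by rw [Fintype.card_subtype_ne, hcard, Nat.add_sub_cancel]⟩
  intro y
  obtain ⟨x, hx⟩ := hbij.surjective y
  exact ⟨x, hx⟩

lemma Function.Surjective.injective_restrict_ne (hcard : Fintype.card α = Fintype.card β + 1)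
    {f : α → β} (hf : Surjective f) {a b : α} (hab : a ≠ b) (hfab : f a = f b) :
    Injective fun x : {x // x ≠ a} => f x := by
  refine ((Fintype.bijective_iff_surjective_and_card _).2
    ⟨fun y => ?_, by rw [Fintype.card_subtype_ne, hcard, Nat.add_sub_cancel]⟩).injective
  obtain ⟨x, rfl⟩ := hf y
  by_cases hxa : x = a
  · exact ⟨⟨b, hab.symm⟩, by rw [hxa, hfab]⟩
  · exact ⟨⟨x, hxa⟩, rfl⟩

lemma Function.Surjective.card_filter_injective_restrict_ne
    (hcard : Fintype.card α = Fintype.card β + 1) {f : α → β} (hf : Surjective f) :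
    #{a : α | Injective fun x : {x // x ≠ a} => f x} = 2 := by
  obtain ⟨a, b, hab, hfab⟩ := Fintype.exists_ne_map_eq_of_card_lt f (by omega)
  suffices h : ({a : α | Injective fun x : {x // x ≠ a} => f x} : Finset α) = {a, b} by
    rw [h, card_pair hab]
  ext x
  simp only [mem_filter, mem_univ, true_and, mem_insert, mem_singleton]
  refine ⟨fun hinj => ?_, ?_⟩
  · by_contra! hx
    exact hab (congrArg Subtype.val (@hinj ⟨a, hx.1.symm⟩ ⟨b, hx.2.symm⟩ hfab))
  · rintro (rfl | rfl)
    · exact hf.injective_restrict_ne hcard hab hfab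
    · exact hf.injective_restrict_ne hcard hab.symm hfab.symm

lemma card_filter_injective_restrict_ne (a : α) :
    #{f : α → β | Injective fun x : {x // x ≠ a} => f x}
      = (Fintype.card β).descFactorial (Fintype.card α - 1) * Fintype.card β := by
  let e : {f : α → β // Injective fun x : {x // x ≠ a} => f x} ≃ ({x // x ≠ a} ↪ β) × β :=
    ((Equiv.subtypeEquiv ((Equiv.funSplitAt a β).trans (Equiv.prodComm _ _)) fun _ => Iff.rfl).trans
      Equiv.prodSubtypeFstEquivSubtypeProd).trans
      (Equiv.prodCongr (Equiv.subtypeInjectiveEquivEmbedding _ _) (Equiv.refl β))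
  rw [← Fintype.card_subtype, Fintype.card_congr e, Fintype.card_prod, Fintype.card_embedding_eq,
    Fintype.card_subtype_ne]

theorem card_filter_surjective_mul_two (hcard : Fintype.card α = Fintype.card β + 1) :
    #{f : α → β | Surjective f} * 2 = (Fintype.card α).factorial * Fintype.card β := by
  let P : (α → β) × α → Prop := fun p => Injective fun x : {x // x ≠ p.2} => p.1 x
  have hcount_by_map : #{p | P p} = #{f : α → β | Surjective f} * 2 := by
    rw [card_filter, Fintype.sum_prod_type, card_filter, sum_mul]
    refine sum_congr rfl fun f _ => ?_
    rw [← card_filter]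
    split_ifs with hf
    · rw [one_mul, ← hf.card_filter_injective_restrict_ne hcard]
    · rw [zero_mul, card_eq_zero, filter_eq_empty_iff]
      exact fun a _ hinj => hf (.of_injective_restrict_ne hcard hinj)
  have hcount_by_point : #{p | P p} = (Fintype.card α).factorial * Fintype.card β := by
    rw [card_filter, Fintype.sum_prod_type_right]
    simp only [← card_filter, P, card_filter_injective_restrict_ne, sum_const, card_univ,
      smul_eq_mul, hcard, Nat.add_sub_cancel, Nat.descFactorial_self, Nat.factorial_succ]
    ring
  rw [← hcount_by_map, hcount_by_point]

end Surjections

theorem card_filter_image_eq_mul_two {α γ : Type*} [Fintype α] [DecidableEq α] [Fintype γ]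
    [DecidableEq γ] (G : Finset γ) (hcard : Fintype.card α = #G + 1) :
    #{c : α → γ | univ.image c = G} * 2 = (Fintype.card α).factorial * #G := by
  have hsurj : #{c : α → γ | univ.image c = G} = #{f : α → G | Surjective f} := by
    refine card_bij' (fun c hc x => ⟨c x, by
        rw [← (mem_filter.1 hc).2]; exact mem_image_of_mem c (mem_univ x)⟩)
      (fun f _ x => (f x).1) (fun c hc => ?_) (fun f hf => ?_) (fun _ _ => rfl) (fun _ _ => rfl)
    · refine mem_filter.2 ⟨mem_univ _, fun y => ?_⟩
      have hy : y.1 ∈ univ.image c := by rw [(mem_filter.1 hc).2]; exact y.2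
      obtain ⟨x, -, hx⟩ := mem_image.1 hy
      exact ⟨x, Subtype.ext hx⟩
    · refine mem_filter.2 ⟨mem_univ _, ?_⟩
      ext y
      simp only [mem_image, mem_univ, true_and]
      refine ⟨fun ⟨x, hx⟩ => hx ▸ (f x).2, fun hy => ?_⟩
      obtain ⟨x, hx⟩ := (mem_filter.1 hf).2 ⟨y, hy⟩
      exact ⟨x, by rw [hx]⟩
  rw [hsurj, ← Fintype.card_coe G]
  convert card_filter_surjective_mul_two (α := α) (β := G) (by rwa [Fintype.card_coe])

section StrongRank

variable {d : ℕ} (A : Matrix (Fin d) (Fin d) ℝ)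

lemma strongRank_eq_sSup : strongRank A =
    sSup {k | k ≤ d ∧ ∀ s : Finset (Fin d), #s = k → LinearIndepOn ℝ A.col (s : Set (Fin d))} :=
  rfl

theorem strongRank_eq_one_iff (hd : 2 ≤ d) :
    strongRank A = 1 ↔ (∀ j, A.col j ≠ 0) ∧ ∃ i j, i ≠ j ∧ ¬ LinearIndepOn ℝ A.col {i, j} := by
  set S := {k | k ≤ d ∧ ∀ s : Finset (Fin d), #s = k → LinearIndepOn ℝ A.col (s : Set (Fin d))}
  have hS : IsLowerSet S := by
    rintro k l hlk ⟨hkd, hk⟩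
    refine ⟨hlk.trans hkd, fun s hs => ?_⟩
    obtain ⟨t, hst, -, ht⟩ := exists_subsuperset_card_eq (subset_univ s) (hs.trans_le hlk)
      (by rwa [card_univ, Fintype.card_fin])
    exact (hk t ht).mono (coe_subset.2 hst)
  have hone : 1 ∈ S ↔ ∀ j, A.col j ≠ 0 := by
    refine ⟨fun h j => ?_, fun h => ⟨by omega, fun s hs => ?_⟩⟩
    · exact (linearIndepOn_singleton_iff ℝ).1 (by simpa using h.2 {j} (card_singleton j))
    · obtain ⟨j, rfl⟩ := card_eq_one.1 hs
      simpa using (linearIndepOn_singleton_iff ℝ).2 (h j)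
  have htwo : 2 ∈ S ↔ ∀ i j, i ≠ j → LinearIndepOn ℝ A.col {i, j} := by
    refine ⟨fun h i j hij => ?_, fun h => ⟨hd, fun s hs => ?_⟩⟩
    · simpa using h.2 {i, j} (card_pair hij)
    · obtain ⟨i, j, hij, rfl⟩ := card_eq_two.1 hs
      simpa using h i j hij
  have hzero : 0 ∈ S := ⟨Nat.zero_le d, fun s hs => by simp [card_eq_zero.1 hs]⟩
  rw [strongRank_eq_sSup, Nat.sSup_eq_iff_of_isLowerSet hS ⟨0, hzero⟩ ⟨d, fun k hk => hk.1⟩,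
    hone, htwo]
  simp only [not_forall, exists_prop]

end StrongRank

lemma bvToR_injective {d : ℕ} : Injective (bvToR (d := d)) := by
  intro u v h
  funext i
  have hi := congrFun h i
  simp only [bvToR] at hi
  cases hu : u i <;> cases hv : v i <;> simp_all

lemma exists_smul_bvToR_eq_iff {d : ℕ} {u v : Fin d → Bool} (hv : bvToR v ≠ 0) :
    (∃ c : ℝ, c • bvToR u = bvToR v) ↔ u = v := by
  refine ⟨fun ⟨c, hc⟩ => ?_, fun h => ⟨1, by rw [h, one_smul]⟩⟩
  obtain ⟨i, hi⟩ := Function.ne_iff.1 hv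
  have hci := congrFun hc i
  simp only [bvToR, Pi.smul_apply, smul_eq_mul, Pi.zero_apply] at hci hi
  have hc1 : c = 1 := by
    split_ifs at hci hi <;> simp_all
  rw [hc1, one_smul] at hc
  exact bvToR_injective hc

lemma col_bmToR {d : ℕ} (M : Matrix (Fin d) (Fin d) Bool) (j : Fin d) :
    (bmToR M).col j = bvToR (M.col j) :=
  rfl

lemma strongRank_bmToR_eq_one_iff {d : ℕ} (hd : 2 ≤ d) (M : Matrix (Fin d) (Fin d) Bool) :
    strongRank (bmToR M) = 1 ↔
      (∀ j, bvToR (M.col j) ≠ 0) ∧ ∃ i j, i ≠ j ∧ M.col i = M.col j := by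
  simp only [strongRank_eq_one_iff _ hd, col_bmToR]
  refine and_congr_right fun hnz => exists₂_congr fun i j => and_congr_right fun hij => ?_
  rw [linearIndepOn_pair_iff _ hij (by simpa [col_bmToR] using hnz i)]
  simp only [col_bmToR, not_forall, not_not]
  exact exists_smul_bvToR_eq_iff (hnz j)

lemma rank_bmToR {d : ℕ} (M : Matrix (Fin d) (Fin d) Bool) :
    (bmToR M).rank = (bvToR '' (univ.image M.col : Set (Fin d → Bool))).finrank ℝ := by
  rw [Matrix.rank_eq_finrank_span_cols, coe_image, coe_univ, Set.image_univ, ← Set.range_comp]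
  rfl

lemma mem_Gset_iff {d : ℕ} (G : Finset (Fin d → Bool)) :
    G ∈ Gset d ↔ #G = d - 1 ∧ (bvToR '' (G : Set (Fin d → Bool))).finrank ℝ = d - 1 := by
  simp only [Gset, mem_filter, mem_univ, true_and, linearIndependent_iff_card_eq_finrank_span,
    Fintype.card_coe]
  exact and_congr_right fun hG => by rw [hG, eq_comm, Set.image_eq_range]; exact Iff.rfl

theorem rank_eq_and_strongRank_eq_one_iff {d : ℕ} (hd : 2 ≤ d) (M : Matrix (Fin d) (Fin d) Bool) :
    ((bmToR M).rank = d - 1 ∧ strongRank (bmToR M) = 1) ↔ univ.image M.col ∈ Gset d := by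
  rw [strongRank_bmToR_eq_one_iff hd, rank_bmToR]
  set G := univ.image M.col
  constructor
  · rintro ⟨hrank, -, i, j, hij, hcol⟩
    have hG : #G < d := by
      refine (card_image_le.trans_eq (card_fin d)).lt_of_ne fun h => hij ?_
      exact (card_image_iff.1 (h.trans (card_fin d).symm)) (mem_coe.2 (mem_univ i))
        (mem_coe.2 (mem_univ j)) hcol
    have hfinrank : (bvToR '' (G : Set (Fin d → Bool))).finrank ℝ ≤ #G := by
      rw [← coe_image]
      exact (finrank_span_finset_le_card _).trans card_image_le
    exact (mem_Gset_iff G).2 ⟨by omega, hrank⟩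
  · intro hG
    obtain ⟨hcard, hrank⟩ := (mem_Gset_iff G).1 hG
    refine ⟨hrank, fun j => ?_, ?_⟩
    · exact (mem_filter.1 hG).2.2.ne_zero ⟨M.col j, mem_image_of_mem _ (mem_univ j)⟩
    · have hlt : #G < #(univ : Finset (Fin d)) := by
        rw [hcard, card_univ, Fintype.card_fin]; omega
      obtain ⟨i, -, j, -, hij, hcol⟩ := exists_ne_map_eq_of_card_lt_of_maps_to hlt
        (fun j _ => mem_coe.2 (mem_image_of_mem M.col (mem_univ j)))
      exact ⟨i, j, hij, hcol⟩

lemma card_filter_image_eq_of_card_eq {d : ℕ} (hd : 1 ≤ d) {G : Finset (Fin d → Bool)}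
    (hG : #G = d - 1) :
    (#{c : Fin d → Fin d → Bool | univ.image c = G} : ℝ) = d.factorial / 2 * ((d : ℝ) - 1) := by
  have h := card_filter_image_eq_mul_two (α := Fin d) G (by rw [Fintype.card_fin, hG]; omega)
  rw [Fintype.card_fin, hG] at h
  have hcast : ((d - 1 : ℕ) : ℝ) = d - 1 := by rw [Nat.cast_sub hd, Nat.cast_one]
  rw [← hcast, div_mul_eq_mul_div, eq_div_iff two_ne_zero]
  exact_mod_cast h

/-- The number of `d × d` 0/1-matrices of rank `d - 1` and strong rank `1` equals
`|G(d)| · (d!/2) · (d - 1)`. -/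
theorem stmt9 (d : ℕ) (hd : 2 ≤ d) :
    ((Finset.univ.filter (fun M : Matrix (Fin d) (Fin d) Bool =>
        (bmToR M).rank = d - 1 ∧ strongRank (bmToR M) = 1)).card : ℝ)
      = ((Gset d).card : ℝ) * ((d.factorial : ℝ) / 2) * ((d : ℝ) - 1) := by
  have hcols : #{M : Matrix (Fin d) (Fin d) Bool | (bmToR M).rank = d - 1 ∧
      strongRank (bmToR M) = 1} = #{c : Fin d → Fin d → Bool | univ.image c ∈ Gset d} :=
    card_nbij' Matrix.col (fun c => Matrix.of fun i j => c j i)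
      (fun M hM => mem_filter.2 ⟨mem_univ _, (rank_eq_and_strongRank_eq_one_iff hd M).1
        (mem_filter.1 hM).2⟩)
      (fun c hc => mem_filter.2 ⟨mem_univ _, (rank_eq_and_strongRank_eq_one_iff hd _).2
        (mem_filter.1 hc).2⟩)
      (fun _ _ => rfl) (fun _ _ => rfl)
  rw [hcols, ← sum_card_fiberwise_eq_card_filter, Nat.cast_sum,
    sum_congr rfl fun G hG => card_filter_image_eq_of_card_eq (by omega) ((mem_Gset_iff G).1 hG).1,
    sum_const, nsmul_eq_mul]
  ring
end
end

section
/- Let a ∈ ℝ^d be a nonzero vector with exactly s nonzero entries, s ≥ 1. Then the hyperplane {x ∈ ℝ^d : a^t x = 0} contains at most C(s, ⌊s/2⌋) · 2^{d−s} vectors from {0,1}^d. -/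
/-!
Only the coordinates in the support `S` of `a` matter: a 0/1-vector on the hyperplane is a
zero-sum subset of `S` together with an arbitrary subset of the complement, which gives the
factor `2^{d-s}`. Taking the symmetric difference with the set of negative coordinates turns
zero-sum subsets of `S` injectively into subsets of `S` on which `|a|` sums to a fixed value;
since `|a| > 0` on `S`, these form an antichain, and Sperner's theorem bounds them by
`C(s, ⌊s/2⌋)`.
-/

open scoped Classical
open Filter Matrix

noncomputable section

open Finset
open scoped symmDiff

namespace Finset

variable {α : Type*}

theorem card_le_choose_of_isAntichain_of_forall_subset [DecidableEq α] {S : Finset α}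
    {𝒜 : Finset (Finset α)} (h𝒜 : IsAntichain (· ⊆ ·) (𝒜 : Set (Finset α))) (hS : ∀ T ∈ 𝒜, T ⊆ S) :
    #𝒜 ≤ (#S).choose (#S / 2) := by
  have hmap : ∀ T ∈ 𝒜, (T.subtype (· ∈ S)).map (Function.Embedding.subtype _) = T :=
    fun T hT => subtype_map_of_mem (hS T hT)
  have hinj : Set.InjOn (Finset.subtype (· ∈ S)) 𝒜 := fun T hT T' hT' h => by
    rw [← hmap T hT, ← hmap T' hT', h]
  rw [← card_image_of_injOn hinj, ← Fintype.card_coe S]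
  refine IsAntichain.sperner ?_
  rw [coe_image]
  rintro _ ⟨T, hT, rfl⟩ _ ⟨T', hT', rfl⟩ hne hsub
  refine hne (congrArg _ (h𝒜.eq hT hT' ?_))
  rw [← hmap T hT, ← hmap T' hT']
  exact map_subset_map.2 hsub

theorem isAntichain_setOf_sum_eq {M : Type*} [AddCommMonoid M] [PartialOrder M]
    [IsOrderedCancelAddMonoid M] {S : Finset α} {w : α → M} (hw : ∀ i ∈ S, 0 < w i) (c : M) :
    IsAntichain (· ⊆ ·) {T : Finset α | T ⊆ S ∧ ∑ i ∈ T, w i = c} := by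
  rintro T ⟨-, hT⟩ T' ⟨hT'S, hT'⟩ hne hsub
  obtain ⟨i, hiT', hiT⟩ := exists_of_ssubset (lt_of_le_of_ne hsub hne)
  refine (sum_lt_sum_of_subset hsub hiT' hiT (hw i (hT'S hiT')) fun j hj _ => ?_).ne
    (hT.trans hT'.symm)
  exact (hw j (hT'S hj)).le

theorem sum_abs_symmDiff_filter_neg [DecidableEq α] {G : Type*} [AddCommGroup G]
    [LinearOrder G] [IsOrderedAddMonoid G] {S T : Finset α} {w : α → G} (hT : T ⊆ S) :
    ∑ i ∈ T ∆ S.filter (w · < 0), |w i| = ∑ i ∈ T, w i - ∑ i ∈ S.filter (w · < 0), w i := by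
  set N := S.filter (w · < 0)
  have hpos : ∑ i ∈ T \ N, |w i| = ∑ i ∈ T, w i - ∑ i ∈ T ∩ N, w i := by
    rw [← sum_sdiff_eq_sub inter_subset_left, sdiff_inter_self_left]
    refine sum_congr rfl fun i hi => abs_of_nonneg ?_
    simp only [mem_sdiff, N, mem_filter, not_and, not_lt] at hi
    exact hi.2 (hT hi.1)
  have hneg : ∑ i ∈ N \ T, |w i| = -(∑ i ∈ N, w i - ∑ i ∈ T ∩ N, w i) := by
    rw [← sum_sdiff_eq_sub inter_subset_right, inter_comm, sdiff_inter_self_left,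
      ← sum_neg_distrib]
    refine sum_congr rfl fun i hi => abs_of_neg ?_
    exact (mem_filter.1 (mem_sdiff.1 hi).1).2
  rw [Finset.symmDiff_def, sum_union disjoint_sdiff_sdiff, hpos, hneg]
  abel

theorem card_filter_sum_eq_zero_le_choose [DecidableEq α] {G : Type*} [AddCommGroup G]
    [LinearOrder G] [IsOrderedAddMonoid G] {S : Finset α} {w : α → G} (hw : ∀ i ∈ S, w i ≠ 0) :
    #(S.powerset.filter fun T => ∑ i ∈ T, w i = 0) ≤ (#S).choose (#S / 2) := by
  set N := S.filter (w · < 0)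
  calc #(S.powerset.filter fun T => ∑ i ∈ T, w i = 0)
      ≤ #(S.powerset.filter fun T => ∑ i ∈ T, |w i| = -∑ i ∈ N, w i) := by
        refine card_le_card_of_injOn (· ∆ N) (fun T hT => ?_) (symmDiff_left_injective N).injOn
        simp only [coe_filter, mem_powerset, Set.mem_ofPred_eq] at hT ⊢
        refine ⟨symmDiff_le_sup.trans (sup_le hT.1 (filter_subset _ _)), ?_⟩
        rw [sum_abs_symmDiff_filter_neg hT.1, hT.2, zero_sub]
    _ ≤ (#S).choose (#S / 2) :=
        card_le_choose_of_isAntichain_of_forall_subset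
          ((isAntichain_setOf_sum_eq (fun i hi => abs_pos.2 (hw i hi)) _).subset
            fun T hT => by simpa using hT)
          (fun T hT => mem_powerset.1 (mem_filter.1 hT).1)

theorem card_le_card_mul_two_pow_of_inter_mem [Fintype α] [DecidableEq α]
    {𝒰 𝒜 : Finset (Finset α)} {S : Finset α} (h : ∀ U ∈ 𝒰, U ∩ S ∈ 𝒜) : #𝒰 ≤ #𝒜 * 2 ^ #Sᶜ := by
  calc #𝒰 ≤ #(𝒜 ×ˢ Sᶜ.powerset) := by
        refine card_le_card_of_injOn (fun U => (U ∩ S, U \ S))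
          (fun U hU => mem_product.2 ⟨h U hU, mem_powerset.2 ?_⟩) fun U _ U' _ hUU' => ?_
        · exact fun i hi => mem_compl.2 (mem_sdiff.1 hi).2
        · simp only [Prod.mk.injEq] at hUU'
          rw [← sup_inf_sdiff U S, ← sup_inf_sdiff U' S]
          exact congrArg₂ _ hUU'.1 hUU'.2
    _ = #𝒜 * 2 ^ #Sᶜ := by rw [card_product, card_powerset]

end Finset

theorem sum_mul_bvToR {d : ℕ} (a : Fin d → ℝ) (x : Fin d → Bool) :
    ∑ i, a i * bvToR x i = ∑ i ∈ univ.filter (x · = true), a i := by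
  simp [bvToR, sum_filter]

theorem stmt15_general (d s : ℕ) (a : Fin d → ℝ)
    (hs : (Finset.univ.filter (fun i => a i ≠ 0)).card = s) :
    (Finset.univ.filter (fun x : Fin d → Bool => ∑ i, a i * bvToR x i = 0)).card
      ≤ s.choose (s / 2) * 2 ^ (d - s) := by
  set S := univ.filter (a · ≠ 0)
  set support : (Fin d → Bool) → Finset (Fin d) := fun x => univ.filter (x · = true)
  have hinj : Function.Injective support := fun x y hxy => funext fun i => by
    simpa [support] using congrArg (i ∈ ·) hxy
  calc _ = #((univ.filter fun x : Fin d → Bool => ∑ i, a i * bvToR x i = 0).image support) :=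
        (card_image_of_injective _ hinj).symm
    _ ≤ #(S.powerset.filter fun T => ∑ i ∈ T, a i = 0) * 2 ^ #Sᶜ := by
        refine card_le_card_mul_two_pow_of_inter_mem fun U hU => ?_
        obtain ⟨x, hx, rfl⟩ := mem_image.1 hU
        rw [mem_filter, sum_mul_bvToR] at hx
        rw [mem_filter, mem_powerset, inter_filter, inter_univ, sum_filter_ne_zero]
        exact ⟨filter_subset_filter _ (subset_univ _), hx.2⟩
    _ ≤ s.choose (s / 2) * 2 ^ (d - s) := by
        rw [card_compl, Fintype.card_fin, ← hs]
        gcongr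
        exact card_filter_sum_eq_zero_le_choose fun i hi => (mem_filter.1 hi).2

/-- If `a ∈ ℝ^d` is nonzero with exactly `s ≥ 1` nonzero entries, then the hyperplane
`{x : aᵗx = 0}` contains at most `C(s, ⌊s/2⌋) · 2^{d-s}` vectors from `{0,1}^d`. -/
theorem stmt15 (d s : ℕ) (a : Fin d → ℝ) (ha : a ≠ 0) (hs1 : 1 ≤ s)
    (hs : (Finset.univ.filter (fun i => a i ≠ 0)).card = s) :
    (Finset.univ.filter (fun x : Fin d → Bool => ∑ i, a i * bvToR x i = 0)).card
      ≤ s.choose (s / 2) * 2 ^ (d - s) :=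
  stmt15_general d s a hs
end
end

section
/- Let M be a d×d 0/1-matrix of rank d−1 over ℝ, and let a ∈ ℝ^d be a nonzero vector with M·a = 0. Then the number of nonzero entries of a equals (strong rank of M) + 1, and for each index k, the family of columns of M with the k-th column removed is linearly independent if and only if a_k ≠ 0. -/
open scoped Classical
open Filter Matrix

noncomputable section

lemma mulVec_eq_sum_cols {d : ℕ} (M : Matrix (Fin d) (Fin d) ℝ) (x : Fin d → ℝ) :
    M *ᵥ x = ∑ j, x j • Mᵀ j := by
  funext i
  simp [Matrix.mulVec, dotProduct, Finset.sum_apply, mul_comm, Matrix.transpose]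

lemma ker_eq_span {d : ℕ} (M : Matrix (Fin d) (Fin d) ℝ) (a : Fin d → ℝ)
    (hrank : M.rank = d - 1) (ha : a ≠ 0) (hMa : M *ᵥ a = 0) :
    LinearMap.ker M.mulVecLin = Submodule.span ℝ {a} := by
  obtain ⟨i, hi⟩ := Function.ne_iff.mp ha
  have hd : 1 ≤ d := i.pos
  have hrn := LinearMap.finrank_range_add_finrank_ker M.mulVecLin
  have hR : Module.finrank ℝ (LinearMap.range M.mulVecLin) = d - 1 := hrank
  have hker : Module.finrank ℝ (LinearMap.ker M.mulVecLin) = 1 := by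
    rw [hR, Module.finrank_pi, Fintype.card_fin] at hrn; omega
  have hmem : a ∈ LinearMap.ker M.mulVecLin := by
    simpa [Matrix.mulVecLin_apply] using hMa
  have hle : Submodule.span ℝ {a} ≤ LinearMap.ker M.mulVecLin := by
    simpa [Submodule.span_singleton_le_iff_mem] using hmem
  have h1 := finrank_span_singleton (K := ℝ) ha
  exact (Submodule.eq_of_le_of_finrank_le hle (by rw [hker, h1])).symm

lemma key {d : ℕ} (M : Matrix (Fin d) (Fin d) ℝ) (a : Fin d → ℝ)
    (hker : LinearMap.ker M.mulVecLin = Submodule.span ℝ {a}) (ha : a ≠ 0)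
    (hMa : M *ᵥ a = 0) (p : Fin d → Prop) :
    LinearIndependent ℝ (fun j : {x // p x} => Mᵀ j.1) ↔ ∃ i, ¬ p i ∧ a i ≠ 0 := by
  have hsum : ∀ x : Fin d → ℝ, (∀ i, ¬ p i → x i = 0) →
      ∑ j : {x // p x}, x j.1 • Mᵀ j.1 = M *ᵥ x := by
    intro x hx
    rw [mulVec_eq_sum_cols]
    rw [← Finset.sum_subtype (p := p) (Finset.univ.filter p) (by simp)
      (fun j => x j • Mᵀ j)]
    refine Finset.sum_filter_of_ne fun j _ hj => ?_
    by_contra hpj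
    exact hj (by rw [hx j hpj, zero_smul])
  constructor
  · intro hLI
    by_contra hcon
    push_neg at hcon
    have hsupp : ∀ i, ¬ p i → a i = 0 := fun i hi => hcon i hi
    have h0 : ∑ j : {x // p x}, a j.1 • Mᵀ j.1 = 0 := by
      rw [hsum a hsupp, hMa]
    have := Fintype.linearIndependent_iff.mp hLI (fun j => a j.1) h0
    apply ha
    funext i
    by_cases hpi : p i
    · exact this ⟨i, hpi⟩
    · exact hsupp i hpi
  · rintro ⟨k, hk, hak⟩
    refine Fintype.linearIndependent_iff.mpr fun g hg => ?_
    set x : Fin d → ℝ := fun i => if h : p i then g ⟨i, h⟩ else 0 with hxdef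
    have hx0 : ∀ i, ¬ p i → x i = 0 := fun i hi => by simp [hxdef, hi]
    have hMx : M *ᵥ x = 0 := by
      rw [← hsum x hx0, ← hg]
      refine Finset.sum_congr rfl fun j _ => ?_
      simp [hxdef, j.2]
    have hxk : x ∈ Submodule.span ℝ {a} := by
      rw [← hker]; simpa [Matrix.mulVecLin_apply] using hMx
    obtain ⟨c, hc⟩ := Submodule.mem_span_singleton.mp hxk
    have hxk0 : x k = 0 := hx0 k hk
    have hc0 : c = 0 := by
      have : c * a k = 0 := by
        have := congrFun hc k
        simp only [Pi.smul_apply, smul_eq_mul] at this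
        rw [this, hxk0]
      rcases mul_eq_zero.mp this with h | h
      · exact h
      · exact absurd h hak
    have hx : x = 0 := by rw [← hc, hc0, zero_smul]
    intro j
    have := congrFun hx j.1
    simpa [hxdef, j.2] using this

/-- If `M` is a `d × d` 0/1-matrix of rank `d - 1` and `a ≠ 0` satisfies `M·a = 0`, then
the number of nonzero entries of `a` is `strongRank M + 1`, and for each `k`, the columns
of `M` other than the `k`-th are linearly independent iff `a k ≠ 0`. -/
theorem stmt16 (d : ℕ) (M : Matrix (Fin d) (Fin d) Bool) (a : Fin d → ℝ)
    (hrank : (bmToR M).rank = d - 1) (ha : a ≠ 0) (hMa : bmToR M *ᵥ a = 0) :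
    (Finset.univ.filter (fun i => a i ≠ 0)).card = strongRank (bmToR M) + 1 ∧
      ∀ k : Fin d,
        (LinearIndependent ℝ (fun j : {j : Fin d // j ≠ k} => (bmToR M)ᵀ j.1) ↔ a k ≠ 0) := by
  have hker := ker_eq_span (bmToR M) a hrank ha hMa
  have hkey := key (bmToR M) a hker ha hMa
  set T := Finset.univ.filter (fun i => a i ≠ 0) with hT
  have hTmem : ∀ i, i ∈ T ↔ a i ≠ 0 := by simp [hT]
  have hT1 : 1 ≤ T.card := by
    obtain ⟨i, hi⟩ := Function.ne_iff.mp ha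
    exact Finset.card_pos.mpr ⟨i, (hTmem i).mpr hi⟩
  have hTd : T.card ≤ d := by
    simpa using Finset.card_le_card (Finset.filter_subset _ (Finset.univ : Finset (Fin d)))
  constructor
  · -- strongRank computation
    have hub : ∀ k ∈ {k | k ≤ d ∧ ∀ s : Finset (Fin d), s.card = k →
        LinearIndependent ℝ (fun j : {x // x ∈ s} => (bmToR M)ᵀ j.1)}, k ≤ T.card - 1 := by
      rintro k ⟨hkd, hk⟩
      by_contra hlt
      push_neg at hlt
      have hTk : T.card ≤ k := by omega
      obtain ⟨s, hTs, hscard⟩ := Finset.exists_superset_card_eq hTk (by simpa using hkd)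
      have hLI := hk s hscard
      obtain ⟨i, his, hai⟩ := (hkey (· ∈ s)).mp hLI
      exact his (hTs ((hTmem i).mpr hai))
    have hmem : T.card - 1 ∈ {k | k ≤ d ∧ ∀ s : Finset (Fin d), s.card = k →
        LinearIndependent ℝ (fun j : {x // x ∈ s} => (bmToR M)ᵀ j.1)} := by
      refine ⟨by omega, fun s hs => ?_⟩
      refine (hkey (· ∈ s)).mpr ?_
      by_contra hcon
      push_neg at hcon
      have hTs : T ⊆ s := fun i hi => by
        by_contra hns
        exact (hTmem i).mp hi (hcon i hns)
      have := Finset.card_le_card hTs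
      omega
    have : strongRank (bmToR M) = T.card - 1 := by
      refine le_antisymm (csSup_le ⟨_, hmem⟩ hub) (le_csSup ⟨d, fun k hk => hk.1⟩ hmem)
    omega
  · intro k
    rw [hkey (· ≠ k)]
    constructor
    · rintro ⟨i, hik, hai⟩
      push_neg at hik
      rwa [← hik]
    · intro h
      exact ⟨k, by simp, h⟩
end
end
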